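/- In a commutative ring R with elements t_{a,b}, for every n ∈ ℕ the (n+1)×(n+1) matrices M and N defined by M[i,j] = Σ_{α ∈ Q^I_{i,j}} ∏_{r=j}^{i−1} t_{r+1, α_{i−r}} and N[i,j] = (−1)^{i−j} Σ_{α ∈ Q^{SD}_{i,j}} ∏_{s=j}^{i−1} t_{s+1, α_{i−s}} satisfy M·N = I_{n+1}. -/
import Mathlib


open scoped Classical in
/-- `Q^I_{i,j}`: for `i ≥ j`, the weakly increasing sequences `α₁ ≤ … ≤ α_{i-j}` of
nonnegative integers with `αᵣ ≤ i - r` (here zero-indexed, so `α k ≤ i - (k+1)`; the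
values are encoded in `Fin (i+1)`); for `i = j` only the empty sequence, and for `i < j`
the empty set. -/
noncomputable def QIset (i j : ℕ) : Finset (Fin (i - j) → Fin (i + 1)) :=
  if j ≤ i then
    Finset.univ.filter
      (fun α => Monotone α ∧ ∀ r : Fin (i - j), (α r : ℕ) ≤ i - ((r : ℕ) + 1))
  else ∅

open scoped Classical in
/-- `Q^{SD}_{i,j}`: for `i ≥ j`, the strictly decreasing sequences `α₁ > … > α_{i-j}` of
nonnegative integers with `αᵣ ≤ i - r` (here zero-indexed, so `α k ≤ i - (k+1)`; the
values are encoded in `Fin (i+1)`); for `i = j` only the empty sequence, and for `i < j`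
the empty set. -/
noncomputable def QSDset (i j : ℕ) : Finset (Fin (i - j) → Fin (i + 1)) :=
  if j ≤ i then
    Finset.univ.filter
      (fun α => StrictAnti α ∧ ∀ r : Fin (i - j), (α r : ℕ) ≤ i - ((r : ℕ) + 1))
  else ∅

section StmtAux

open scoped Classical

private lemma core_sign {R : Type*} [CommRing R] (d : ℕ) (hd : 0 < d) (u : ℕ → ℕ) :
    ∑ e ∈ (Finset.range (d + 1)).filter
        (fun e => (∀ p q : ℕ, p ≤ q → q < e → u p ≤ u q) ∧
          (∀ p q : ℕ, e ≤ p → p < q → q < d → u q < u p)),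
      ((-1 : R) ^ (d - e)) = 0 := by
  set S := (Finset.range (d + 1)).filter
        (fun e => (∀ p q : ℕ, p ≤ q → q < e → u p ≤ u q) ∧
          (∀ p q : ℕ, e ≤ p → p < q → q < d → u q < u p)) with hSdef
  have memS : ∀ e, e ∈ S ↔ e < d + 1 ∧ (∀ p q : ℕ, p ≤ q → q < e → u p ≤ u q) ∧
      (∀ p q : ℕ, e ≤ p → p < q → q < d → u q < u p) := by
    intro e
    simp [hSdef, Finset.mem_filter, Finset.mem_range]
  rcases S.eq_empty_or_nonempty with h | h
  · rw [h]; simp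
  · set m := S.min' h with hm
    have hmS : m ∈ S := S.min'_mem h
    obtain ⟨hmr, hA, hB⟩ := (memS m).1 hmS
    have hmin : ∀ e ∈ S, m ≤ e := fun e he => S.min'_le e he
    have hmd : m < d := by
      by_contra hc
      have hmd' : m = d := by omega
      have : d - 1 ∈ S := by
        rw [memS]
        refine ⟨by omega, fun p q hpq hq => hA p q hpq (by omega), fun p q hp hpq hq => by omega⟩
      have := hmin _ this
      omega
    have hm1 : m + 1 ∈ S := by
      rw [memS]
      refine ⟨by omega, ?_, fun p q hp hpq hq => hB p q (by omega) hpq hq⟩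
      intro p q hpq hq
      rcases Nat.lt_or_ge q m with hqm | hqm
      · exact hA p q hpq hqm
      · have hq' : q = m := by omega
        subst hq'
        rcases Nat.eq_or_lt_of_le hpq with rfl | hpq'
        · exact le_rfl
        · have hm1' : 1 ≤ m := by omega
          have hnot : m - 1 ∉ S := by
            intro hmem
            have := hmin _ hmem
            omega
          have : ¬ (∀ p q : ℕ, m - 1 ≤ p → p < q → q < d → u q < u p) := by
            intro hB'
            exact hnot ((memS (m-1)).2 ⟨by omega,
              fun p q hpq hq => hA p q hpq (by omega), hB'⟩)
          push_neg at this
          obtain ⟨p', q', hp', hpq', hq', hle⟩ := this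
          have hp'm : p' = m - 1 := by
            by_contra hne
            have : m ≤ p' := by omega
            exact absurd (hB p' q' this hpq' hq') (by omega)
          subst hp'm
          have hum : u (m - 1) ≤ u m := by
            rcases Nat.eq_or_lt_of_le (show m ≤ q' by omega) with rfl | hq''
            · exact hle
            · exact le_trans hle (le_of_lt (hB m q' le_rfl hq'' hq'))
          calc u p ≤ u (m - 1) := hA p (m - 1) (by omega) (by omega)
            _ ≤ u m := hum
    have hmax : ∀ e ∈ S, e ≤ m + 1 := by
      intro e he
      by_contra hc
      obtain ⟨her, heA, heB⟩ := (memS e).1 he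
      have h1 : u m ≤ u (m + 1) := heA m (m + 1) (by omega) (by omega)
      have h2 : u (m + 1) < u m := hB m (m + 1) le_rfl (by omega) (by omega)
      omega
    have hSeq : S = {m, m + 1} := by
      ext e
      simp only [Finset.mem_insert, Finset.mem_singleton]
      constructor
      · intro he
        have := hmin e he
        have := hmax e he
        omega
      · rintro (rfl | rfl)
        · exact hmS
        · exact hm1
    rw [hSeq, Finset.sum_pair (by omega)]
    have : d - m = (d - (m + 1)) + 1 := by omega
    rw [this, pow_succ]
    ring

private lemma core_sign' {R : Type*} [CommRing R] {i k : ℕ} (hki : k < i) (u : ℕ → ℕ) :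
    ∑ j ∈ (Finset.Icc k i).filter
        (fun j => (∀ p q : ℕ, p ≤ q → q < i - j → u p ≤ u q) ∧
          (∀ p q : ℕ, i - j ≤ p → p < q → q < i - k → u q < u p)),
      ((-1 : R) ^ (j - k)) = 0 := by
  rw [← core_sign (i - k) (by omega) u]
  apply Finset.sum_nbij' (fun j => i - j) (fun e => i - e)
  · intro j hj
    simp only [Finset.mem_filter, Finset.mem_Icc, Finset.mem_range] at hj ⊢
    exact ⟨by omega, hj.2⟩
  · intro e he
    simp only [Finset.mem_filter, Finset.mem_Icc, Finset.mem_range] at he ⊢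
    have h1 : i - (i - e) = e := by omega
    rw [h1]
    exact ⟨by omega, he.2⟩
  · intro j hj
    simp only [Finset.mem_filter, Finset.mem_Icc] at hj
    omega
  · intro e he
    simp only [Finset.mem_filter, Finset.mem_range] at he
    omega
  · intro j hj
    simp only [Finset.mem_filter, Finset.mem_Icc] at hj
    congr 1
    omega

set_option maxHeartbeats 1000000 in
private lemma sum_split {R : Type*} [CommRing R] (t : ℕ → ℕ → R) {i j k : ℕ}
    (hkj : k ≤ j) (hji : j ≤ i) :
    (∑ α ∈ QIset i j, ∏ q : Fin (i - j), t (i - (q : ℕ)) (α q : ℕ)) *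
      (∑ β ∈ QSDset j k, ∏ q : Fin (j - k), t (j - (q : ℕ)) (β q : ℕ)) =
    ∑ v ∈ Finset.univ.filter (fun v : Fin (i - k) → Fin (i + 1) =>
        ((∀ p q : Fin (i - k), (p : ℕ) ≤ (q : ℕ) → (q : ℕ) < i - j → (v p : ℕ) ≤ (v q : ℕ)) ∧
         (∀ p q : Fin (i - k), i - j ≤ (p : ℕ) → (p : ℕ) < (q : ℕ) → (v q : ℕ) < (v p : ℕ))) ∧
        (∀ p : Fin (i - k), (v p : ℕ) ≤ i - ((p : ℕ) + 1))),
      ∏ p : Fin (i - k), t (i - (p : ℕ)) (v p : ℕ) := by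
  rw [Finset.sum_mul_sum, ← Finset.sum_product']
  have hQI : ∀ α, α ∈ QIset i j ↔
      Monotone α ∧ ∀ r : Fin (i - j), (α r : ℕ) ≤ i - ((r : ℕ) + 1) := by
    intro α; rw [QIset, if_pos hji]; simp [Finset.mem_filter]
  have hQSD : ∀ β, β ∈ QSDset j k ↔
      StrictAnti β ∧ ∀ r : Fin (j - k), (β r : ℕ) ≤ j - ((r : ℕ) + 1) := by
    intro β; rw [QSDset, if_pos hkj]; simp [Finset.mem_filter]
  have hj1 : j + 1 ≤ i + 1 := by omega
  set F : ((Fin (i - j) → Fin (i + 1)) × (Fin (j - k) → Fin (j + 1))) →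
      (Fin (i - k) → Fin (i + 1)) :=
    fun x p =>
      if h : (p : ℕ) < i - j then x.1 ⟨(p : ℕ), h⟩
      else Fin.castLE hj1 (x.2 ⟨(p : ℕ) - (i - j), by have := p.isLt; omega⟩) with hFdef
  have hFval1 : ∀ x (m : ℕ) (hm : m < i - k) (h : m < i - j),
      ((F x ⟨m, hm⟩ : ℕ)) = (x.1 ⟨m, h⟩ : ℕ) := by
    intro x m hm h
    simp only [hFdef]
    rw [dif_pos h]
  have hFval2 : ∀ x (m : ℕ) (hm : m < i - k) (h : ¬ m < i - j),
      ((F x ⟨m, hm⟩ : ℕ)) = (x.2 ⟨m - (i - j), by omega⟩ : ℕ) := by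
    intro x m hm h
    simp only [hFdef]
    rw [dif_neg h]
    simp
  apply Finset.sum_bij (fun x _ => F x)
  · -- maps into target
    intro x hx
    rw [Finset.mem_product] at hx
    obtain ⟨hαmono, hαbd⟩ := (hQI x.1).1 hx.1
    obtain ⟨hβanti, hβbd⟩ := (hQSD x.2).1 hx.2
    have hαbd' : ∀ m (hm : m < i - j), (x.1 ⟨m, hm⟩ : ℕ) ≤ i - (m + 1) :=
      fun m hm => hαbd ⟨m, hm⟩
    have hβbd' : ∀ m (hm : m < j - k), (x.2 ⟨m, hm⟩ : ℕ) ≤ j - (m + 1) :=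
      fun m hm => hβbd ⟨m, hm⟩
    simp only [Finset.mem_filter, Finset.mem_univ, true_and]
    refine ⟨⟨?_, ?_⟩, ?_⟩
    · rintro ⟨p, hp⟩ ⟨q, hq⟩ hpq hqj
      have hpq' : p ≤ q := hpq
      have hqj' : q < i - j := hqj
      have hpj : p < i - j := by omega
      rw [hFval1 x p hp hpj, hFval1 x q hq hqj']
      exact hαmono (show (⟨p, hpj⟩ : Fin (i - j)) ≤ ⟨q, hqj'⟩ from hpq')
    · rintro ⟨p, hp⟩ ⟨q, hq⟩ hpj hpq
      have hpj' : i - j ≤ p := hpj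
      have hpq' : p < q := hpq
      rw [hFval2 x p hp (by omega), hFval2 x q hq (by omega)]
      exact hβanti (show (⟨p - (i - j), by omega⟩ : Fin (j - k)) < ⟨q - (i - j), by omega⟩ from
        by simp only [Fin.mk_lt_mk]; omega)
    · rintro ⟨p, hp⟩
      show (F x ⟨p, hp⟩ : ℕ) ≤ i - (p + 1)
      by_cases h : p < i - j
      · rw [hFval1 x p hp h]; exact hαbd' p h
      · rw [hFval2 x p hp h]
        have := hβbd' (p - (i - j)) (by omega)
        omega
  · -- injective
    intro x hx x' hx' heq
    have heq' : ∀ p : Fin (i - k), (F x p : ℕ) = (F x' p : ℕ) := by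
      intro p; rw [heq]
    have e1 : x.1 = x'.1 := by
      funext q
      have hq : (q : ℕ) < i - k := by have := q.isLt; omega
      have h1 := heq' ⟨(q : ℕ), hq⟩
      rw [hFval1 x _ hq q.isLt, hFval1 x' _ hq q.isLt] at h1
      have hidx : (⟨(q : ℕ), q.isLt⟩ : Fin (i - j)) = q := Fin.ext rfl
      rw [hidx] at h1
      exact Fin.ext h1
    have e2 : x.2 = x'.2 := by
      funext q
      have hq : (q : ℕ) + (i - j) < i - k := by have := q.isLt; omega
      have h1 := heq' ⟨(q : ℕ) + (i - j), hq⟩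
      rw [hFval2 x _ hq (by omega), hFval2 x' _ hq (by omega)] at h1
      have hidx : (⟨(q : ℕ) + (i - j) - (i - j), by omega⟩ : Fin (j - k)) = q :=
        Fin.ext (by simp)
      rw [hidx] at h1
      exact Fin.ext h1
    exact Prod.ext e1 e2
  · -- surjective
    intro v hv
    simp only [Finset.mem_filter, Finset.mem_univ, true_and] at hv
    obtain ⟨⟨hmono, hanti⟩, hbd⟩ := hv
    have hmono' : ∀ p q (hp : p < i - k) (hq : q < i - k), p ≤ q → q < i - j →
        (v ⟨p, hp⟩ : ℕ) ≤ (v ⟨q, hq⟩ : ℕ) := fun p q hp hq h1 h2 => hmono ⟨p, hp⟩ ⟨q, hq⟩ h1 h2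
    have hanti' : ∀ p q (hp : p < i - k) (hq : q < i - k), i - j ≤ p → p < q →
        (v ⟨q, hq⟩ : ℕ) < (v ⟨p, hp⟩ : ℕ) := fun p q hp hq h1 h2 => hanti ⟨p, hp⟩ ⟨q, hq⟩ h1 h2
    have hbd' : ∀ m (hm : m < i - k), (v ⟨m, hm⟩ : ℕ) ≤ i - (m + 1) := fun m hm => hbd ⟨m, hm⟩
    refine ⟨(fun q => v ⟨(q : ℕ), by have := q.isLt; omega⟩,
             fun q => ⟨(v ⟨(q : ℕ) + (i - j), by have := q.isLt; omega⟩ : ℕ), by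
               have h := hbd' ((q : ℕ) + (i - j)) (by have := q.isLt; omega)
               have := q.isLt
               omega⟩), ?_, ?_⟩
    · rw [Finset.mem_product]
      constructor
      · rw [hQI]
        constructor
        · rintro ⟨p, hp⟩ ⟨q, hq⟩ hpq
          have hpq' : p ≤ q := hpq
          exact hmono' p q (by omega) (by omega) hpq' hq
        · rintro ⟨m, hm⟩
          exact hbd' m (by omega)
      · rw [hQSD]
        constructor
        · rintro ⟨p, hp⟩ ⟨q, hq⟩ hpq
          have hpq' : p < q := hpq
          exact hanti' (p + (i - j)) (q + (i - j)) (by omega) (by omega)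
            (by omega) (by omega)
        · rintro ⟨m, hm⟩
          show (v ⟨m + (i - j), _⟩ : ℕ) ≤ j - (m + 1)
          have := hbd' (m + (i - j)) (by omega)
          omega
    · funext p
      apply Fin.ext
      have hpk : (p : ℕ) < i - k := p.isLt
      by_cases h : (p : ℕ) < i - j
      · rw [show p = ⟨(p : ℕ), hpk⟩ from Fin.ext rfl, hFval1 _ _ hpk h]
      · have hlt : (p : ℕ) - (i - j) + (i - j) < i - k := by omega
        rw [show p = ⟨(p : ℕ), hpk⟩ from Fin.ext rfl, hFval2 _ _ hpk h]
        show ((v ⟨(p : ℕ) - (i - j) + (i - j), hlt⟩ : Fin (i + 1)) : ℕ) =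
          ((v ⟨(p : ℕ), hpk⟩ : Fin (i + 1)) : ℕ)
        have hidx : (⟨(p : ℕ) - (i - j) + (i - j), hlt⟩ : Fin (i - k)) = ⟨(p : ℕ), hpk⟩ :=
          Fin.ext (show (p : ℕ) - (i - j) + (i - j) = (p : ℕ) by omega)
        rw [hidx]
  · -- products match
    rintro ⟨α, β⟩ hx
    simp only
    have hsum : i - k = (i - j) + (j - k) := by omega
    have hcongr := Fin.prod_congr'
      (fun p : Fin (i - k) => t (i - (p : ℕ)) ((F (α, β)) p : ℕ)) hsum.symm
    rw [← hcongr, Fin.prod_univ_add]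
    congr 1
    · apply Finset.prod_congr rfl
      intro q _
      have hval : ((Fin.cast hsum.symm (Fin.castAdd (j - k) q)) : ℕ) = (q : ℕ) := rfl
      rw [show Fin.cast hsum.symm (Fin.castAdd (j - k) q)
            = ⟨(q : ℕ), by have := q.isLt; omega⟩ from Fin.ext hval,
          hFval1 _ _ _ q.isLt]
    · apply Finset.prod_congr rfl
      intro q _
      have hval : ((Fin.cast hsum.symm (Fin.natAdd (i - j) q)) : ℕ) = (i - j) + (q : ℕ) := rfl
      rw [show Fin.cast hsum.symm (Fin.natAdd (i - j) q)
            = ⟨(i - j) + (q : ℕ), by have := q.isLt; omega⟩ from Fin.ext hval,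
          hFval2 _ _ _ (by omega)]
      simp only [Fin.val_mk]
      rw [show i - ((i - j) + (q : ℕ)) = j - (q : ℕ) by omega]
      congr 2
      apply Fin.ext
      simp

private lemma sum_QI_self {R : Type*} [CommRing R] (t : ℕ → ℕ → R) (i : ℕ) :
    ∑ α ∈ QIset i i, ∏ q : Fin (i - i), t (i - (q : ℕ)) (α q : ℕ) = 1 := by
  haveI : IsEmpty (Fin (i - i)) := by rw [Nat.sub_self]; infer_instance
  rw [QIset, if_pos le_rfl]
  rw [Finset.filter_true_of_mem (fun α _ =>
    ⟨fun a b _ => (IsEmpty.false a).elim, fun r => (IsEmpty.false r).elim⟩)]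
  rw [Finset.sum_congr rfl (fun α _ => Finset.prod_of_isEmpty _)]
  simp

private lemma sum_QSD_self {R : Type*} [CommRing R] (t : ℕ → ℕ → R) (i : ℕ) :
    ∑ α ∈ QSDset i i, ∏ q : Fin (i - i), t (i - (q : ℕ)) (α q : ℕ) = 1 := by
  haveI : IsEmpty (Fin (i - i)) := by rw [Nat.sub_self]; infer_instance
  rw [QSDset, if_pos le_rfl]
  rw [Finset.filter_true_of_mem (fun α _ =>
    ⟨fun a b h => (IsEmpty.false a).elim, fun r => (IsEmpty.false r).elim⟩)]
  rw [Finset.sum_congr rfl (fun α _ => Finset.prod_of_isEmpty _)]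
  simp

set_option maxHeartbeats 1000000 in
private lemma main_entry {R : Type*} [CommRing R] (t : ℕ → ℕ → R) {m i k : ℕ}
    (hi : i < m) (hk : k < m) :
    ∑ j ∈ Finset.range m,
      (∑ α ∈ QIset i j, ∏ q : Fin (i - j), t (i - (q : ℕ)) (α q : ℕ)) *
        ((-1 : R) ^ (j - k) *
          ∑ β ∈ QSDset j k, ∏ q : Fin (j - k), t (j - (q : ℕ)) (β q : ℕ))
    = if i = k then 1 else 0 := by
  have hzero : ∀ j, ¬ (k ≤ j ∧ j ≤ i) →
      (∑ α ∈ QIset i j, ∏ q : Fin (i - j), t (i - (q : ℕ)) (α q : ℕ)) *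
        ((-1 : R) ^ (j - k) *
          ∑ β ∈ QSDset j k, ∏ q : Fin (j - k), t (j - (q : ℕ)) (β q : ℕ)) = 0 := by
    intro j hj
    by_cases h1 : j ≤ i
    · have h2 : ¬ k ≤ j := fun h => hj ⟨h, h1⟩
      rw [QSDset, if_neg h2]
      simp
    · rw [QIset, if_neg h1]
      simp
  rcases Nat.lt_trichotomy i k with hik | hik | hik
  · rw [if_neg (by omega)]
    exact Finset.sum_eq_zero fun j _ => hzero j (by omega)
  · subst hik
    rw [if_pos rfl]
    rw [Finset.sum_eq_single i (fun j _ hji => hzero j (by omega))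
      (fun h => absurd (Finset.mem_range.2 hi) h)]
    rw [sum_QI_self, sum_QSD_self, Nat.sub_self]
    simp
  · rw [if_neg (by omega)]
    rw [← Finset.sum_subset (s₁ := Finset.Icc k i) (s₂ := Finset.range m)
      (fun x hx => Finset.mem_range.2 (by rw [Finset.mem_Icc] at hx; omega))
      (fun j _ hj => hzero j (fun hc => hj (Finset.mem_Icc.2 hc)))]
    have h1 : ∀ j ∈ Finset.Icc k i,
        (∑ α ∈ QIset i j, ∏ q : Fin (i - j), t (i - (q : ℕ)) (α q : ℕ)) *
          ((-1 : R) ^ (j - k) *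
            ∑ β ∈ QSDset j k, ∏ q : Fin (j - k), t (j - (q : ℕ)) (β q : ℕ))
        = ∑ v ∈ (Finset.univ : Finset (Fin (i - k) → Fin (i + 1))),
            (-1 : R) ^ (j - k) *
              (if ((∀ p q : Fin (i - k), (p : ℕ) ≤ (q : ℕ) → (q : ℕ) < i - j →
                      (v p : ℕ) ≤ (v q : ℕ)) ∧
                   (∀ p q : Fin (i - k), i - j ≤ (p : ℕ) → (p : ℕ) < (q : ℕ) →
                      (v q : ℕ) < (v p : ℕ))) ∧
                  (∀ p : Fin (i - k), (v p : ℕ) ≤ i - ((p : ℕ) + 1))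
                then ∏ p : Fin (i - k), t (i - (p : ℕ)) (v p : ℕ) else 0) := by
      intro j hj
      rw [Finset.mem_Icc] at hj
      rw [mul_left_comm, sum_split t hj.1 hj.2, Finset.sum_filter, Finset.mul_sum]
    rw [Finset.sum_congr rfl h1]
    rw [Finset.sum_comm (s := Finset.Icc k i)
      (t := (Finset.univ : Finset (Fin (i - k) → Fin (i + 1))))]
    apply Finset.sum_eq_zero
    intro v _
    by_cases hb : ∀ p : Fin (i - k), (v p : ℕ) ≤ i - ((p : ℕ) + 1)
    · have step : ∀ j ∈ Finset.Icc k i,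
          (-1 : R) ^ (j - k) *
            (if ((∀ p q : Fin (i - k), (p : ℕ) ≤ (q : ℕ) → (q : ℕ) < i - j →
                  (v p : ℕ) ≤ (v q : ℕ)) ∧
                 (∀ p q : Fin (i - k), i - j ≤ (p : ℕ) → (p : ℕ) < (q : ℕ) →
                  (v q : ℕ) < (v p : ℕ))) ∧
                (∀ p : Fin (i - k), (v p : ℕ) ≤ i - ((p : ℕ) + 1))
              then ∏ p : Fin (i - k), t (i - (p : ℕ)) (v p : ℕ) else 0)
          = (if ((∀ p q : Fin (i - k), (p : ℕ) ≤ (q : ℕ) → (q : ℕ) < i - j →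
                  (v p : ℕ) ≤ (v q : ℕ)) ∧
                 (∀ p q : Fin (i - k), i - j ≤ (p : ℕ) → (p : ℕ) < (q : ℕ) →
                  (v q : ℕ) < (v p : ℕ)))
              then (-1 : R) ^ (j - k) else 0) *
            ∏ p : Fin (i - k), t (i - (p : ℕ)) (v p : ℕ) := by
        intro j _
        by_cases hc : (∀ p q : Fin (i - k), (p : ℕ) ≤ (q : ℕ) → (q : ℕ) < i - j →
              (v p : ℕ) ≤ (v q : ℕ)) ∧
            (∀ p q : Fin (i - k), i - j ≤ (p : ℕ) → (p : ℕ) < (q : ℕ) →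
              (v q : ℕ) < (v p : ℕ))
        · rw [if_pos ⟨hc, hb⟩, if_pos hc]
        · rw [if_neg (fun hcc => hc hcc.1), if_neg hc]
          simp
      rw [Finset.sum_congr rfl step, ← Finset.sum_mul]
      -- now convert the Fin-level condition to the ℕ-level condition and apply core_sign'
      set u : ℕ → ℕ := fun p => if h : p < i - k then (v ⟨p, h⟩ : ℕ) else 0 with hu
      have huval : ∀ (p : ℕ) (hp : p < i - k), u p = (v ⟨p, hp⟩ : ℕ) := by
        intro p hp; rw [hu]; exact dif_pos hp
      have hcond : ∀ j ∈ Finset.Icc k i,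
          (((∀ p q : Fin (i - k), (p : ℕ) ≤ (q : ℕ) → (q : ℕ) < i - j →
              (v p : ℕ) ≤ (v q : ℕ)) ∧
            (∀ p q : Fin (i - k), i - j ≤ (p : ℕ) → (p : ℕ) < (q : ℕ) →
              (v q : ℕ) < (v p : ℕ)))
          ↔ ((∀ p q : ℕ, p ≤ q → q < i - j → u p ≤ u q) ∧
             (∀ p q : ℕ, i - j ≤ p → p < q → q < i - k → u q < u p))) := by
        intro j hj
        rw [Finset.mem_Icc] at hj
        constructor
        · rintro ⟨h1, h2⟩
          constructor
          · intro p q hpq hq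
            have hqk : q < i - k := by omega
            have hpk : p < i - k := by omega
            rw [huval p hpk, huval q hqk]
            exact h1 ⟨p, hpk⟩ ⟨q, hqk⟩ hpq hq
          · intro p q hp hpq hq
            have hpk : p < i - k := by omega
            rw [huval p hpk, huval q hq]
            exact h2 ⟨p, hpk⟩ ⟨q, hq⟩ hp hpq
        · rintro ⟨h1, h2⟩
          constructor
          · rintro ⟨p, hp⟩ ⟨q, hq⟩ hpq hqj
            have := h1 p q hpq hqj
            rw [huval p hp, huval q hq] at this
            exact this
          · rintro ⟨p, hp⟩ ⟨q, hq⟩ hpj hpq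
            have := h2 p q hpj hpq hq
            rw [huval p hp, huval q hq] at this
            exact this
      rw [← Finset.sum_filter, Finset.filter_congr hcond, core_sign' hik u, zero_mul]
    · apply Finset.sum_eq_zero
      intro j _
      rw [if_neg (fun hcc => hb hcc.2), mul_zero]

end StmtAux

/-- In a commutative ring `R`, the `(n+1) × (n+1)` matrices `M` and `N` given by
`M [i, j] = ∑_{α ∈ Q^I_{i,j}} ∏_{r=j}^{i-1} t (r+1) (α (i-r))` and
`N [i, j] = (-1)^(i-j) * ∑_{α ∈ Q^{SD}_{i,j}} ∏_{s=j}^{i-1} t (s+1) (α (i-s))`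
(products reindexed by `q = i - r - 1`, giving factors `t (i - q) (α q)`; for `i < j`
the sums are empty, so the natural subtraction in the exponent of `-1` is harmless)
satisfy `M * N = 1`. -/


theorem stmt16 {R : Type*} [CommRing R] (n : ℕ) (t : ℕ → ℕ → R) :
    (Matrix.of fun i j : Fin (n + 1) =>
        ∑ α ∈ QIset (i : ℕ) (j : ℕ),
          ∏ q : Fin ((i : ℕ) - (j : ℕ)), t ((i : ℕ) - (q : ℕ)) (α q : ℕ)) *
      (Matrix.of fun i j : Fin (n + 1) =>
        (-1 : R) ^ ((i : ℕ) - (j : ℕ)) *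
          ∑ α ∈ QSDset (i : ℕ) (j : ℕ),
            ∏ q : Fin ((i : ℕ) - (j : ℕ)), t ((i : ℕ) - (q : ℕ)) (α q : ℕ)) = 1 := by
  ext i k
  rw [Matrix.mul_apply]
  simp only [Matrix.of_apply]
  rw [Matrix.one_apply]
  rw [Fin.sum_univ_eq_sum_range (fun j : ℕ =>
    (∑ α ∈ QIset (i : ℕ) j, ∏ q : Fin ((i : ℕ) - j), t ((i : ℕ) - (q : ℕ)) (α q : ℕ)) *
      ((-1 : R) ^ (j - (k : ℕ)) *
        ∑ β ∈ QSDset j (k : ℕ), ∏ q : Fin (j - (k : ℕ)), t (j - (q : ℕ)) (β q : ℕ))) (n + 1)]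
  rw [main_entry t i.isLt k.isLt]
  simp [Fin.ext_iff]
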